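/- The localization forcing LOC_{b,h} is σ-soft-linked; moreover, this is witnessed by the sets L_{b,h}(s,m) = {(p,n) ∈ LOC_{b,h} : s ⊆ p, n = |s|, and |p(i)| ≤ m for all i} for s ∈ S_{<ω}(b,h) and m ∈ ω: each L_{b,h}(s,m) is leaf-linked, their union is dense in LOC_{b,h}, and if (p,n) ∈ L_{b,h}(s,m) and (p',n') ∈ L_{b,h}(s',m') are compatible with |s| ≤ |s'|, then they have a common extension in L_{b,h}(s', m+m'). -/

import Mathlib

universe u

variable {α : Type u} [Preorder α]

/-- `p` and `q` are compatible: some `r` extends both. -/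
def Compat (p q : α) : Prop := ∃ r : α, r ≤ p ∧ r ≤ q

/-- `A` is a maximal antichain: pairwise incompatible, and every condition is
compatible with a member of `A`. -/
def IsMaxAC (A : Set α) : Prop :=
  (∀ p ∈ A, ∀ q ∈ A, p ≠ q → ¬Compat p q) ∧ ∀ p : α, ∃ q ∈ A, Compat p q

/-- `Q` is leaf-linked: for every maximal antichain enumerated as `{p n : n ∈ ω}`
there is `n` such that every `q ∈ Q` is compatible with some `p j`, `j < n`. -/
def LeafLinked (Q : Set α) : Prop :=
  ∀ p : ℕ → α, IsMaxAC (Set.range p) → ∃ n : ℕ, ∀ q ∈ Q, ∃ j < n, Compat q (p j)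

/-- `D` is dense in the preorder. -/
def DenseSub (D : Set α) : Prop := ∀ p : α, ∃ q ∈ D, q ≤ p

/-- The countable chain condition: every antichain is countable. -/
def CCC (α : Type u) [Preorder α] : Prop :=
  ∀ A : Set α, (∀ p ∈ A, ∀ q ∈ A, p ≠ q → ¬Compat p q) → A.Countable

/-- `P` is σ-soft-linked. -/
def SigmaSoftLinked (α : Type u) [Preorder α] : Prop :=
  ∃ Q : ℕ → Set α, (∀ n, LeafLinked (Q n)) ∧ DenseSub (⋃ n, Q n) ∧
    ∀ n n' : ℕ, ∃ k : ℕ, ∀ p ∈ Q n, ∀ q ∈ Q n',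
      Compat p q → ∃ r ∈ Q k, r ≤ p ∧ r ≤ q

/-- Conditions of the localization forcing `LOC_{b,hgt}`: pairs `(p, n)` with
`p ∈ S(b,hgt)` a slalom (`p i ⊆ b i`, `|p i| ≤ hgt i`) which is uniformly
bounded (`∃ m ∀ i, |p i| ≤ m`). -/
def LocCond (b hgt : ℕ → ℕ) : Type :=
  {p : (ℕ → Finset ℕ) × ℕ //
    (∀ i, p.1 i ⊆ Finset.range (b i) ∧ (p.1 i).card ≤ hgt i) ∧
    ∃ m : ℕ, ∀ i, (p.1 i).card ≤ m}

/-- The order of `LOC_{b,hgt}`: `(p',n') ≤ (p,n)` iff `n ≤ n'`,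
`p'↾n = p↾n` and `p i ⊆ p' i` for all `i`. -/
instance (b hgt : ℕ → ℕ) : Preorder (LocCond b hgt) where
  le x y := y.1.2 ≤ x.1.2 ∧ (∀ i < y.1.2, x.1.1 i = y.1.1 i) ∧
    ∀ i, y.1.1 i ⊆ x.1.1 i
  le_refl x := ⟨le_rfl, fun _ _ => rfl, fun _ => subset_rfl⟩
  le_trans x y z hxy hyz :=
    ⟨hyz.1.trans hxy.1,
      fun i hi => (hxy.2.1 i (lt_of_lt_of_le hi hyz.1)).trans (hyz.2.1 i hi),
      fun i => (hyz.2.2 i).trans (hxy.2.2 i)⟩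

/-- `s ∈ S_{<ω}(b,hgt)`: a finite sequence of finite sets with
`s k ⊆ b k` and `|s k| ≤ hgt k`. -/
def FinSlalom (b hgt : ℕ → ℕ) (s : List (Finset ℕ)) : Prop :=
  ∀ (k : ℕ) (hk : k < s.length),
    s[k] ⊆ Finset.range (b k) ∧ (s[k]).card ≤ hgt k

/-- The set `L_{b,hgt}(s,m) = {(p,n) : s ⊆ p, n = |s|, ∀ i |p i| ≤ m}`. -/
def LocSet (b hgt : ℕ → ℕ) (s : List (Finset ℕ)) (m : ℕ) :
    Set (LocCond b hgt) :=
  {p | (∀ (k : ℕ) (hk : k < s.length), p.1.1 k = s[k]) ∧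
    p.1.2 = s.length ∧ ∀ i, (p.1.1 i).card ≤ m}

/-! Density is immediate, and compatible `p ∈ L(s,m)`, `q ∈ L(s',m')` with `|s| ≤ |s'|` are
both extended by the pointwise union `(p ∪ q, |s'|)`. The real work is leaf-linkedness of
`L(s,m)`. If it failed for a maximal antichain `{a j}`, pick `q n ∈ L(s,m)` incompatible with
`a 0, …, a (n-1)`. Since each `q n i` ranges over the finitely many subsets of `b i`, a
non-principal ultrafilter limit `v` of the `q n` exists and lies in `L(s,m)`. Some `r ≤ v` also
extends some `a j`. As `hgt → ∞`, beyond some `N` there is room for `r i ∪ q n i`; choosing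
`n > j` with `q n` equal to `v` below `N`, `(r ∪ q n, N)` extends both `r` and `q n`, so `q n`
is compatible with `a j`, a contradiction. -/

open Filter

theorem Compat.symm {p q : α} (h : Compat p q) : Compat q p :=
  let ⟨r, hp, hq⟩ := h
  ⟨r, hq, hp⟩

theorem Compat.mono_right {p q q' : α} (h : Compat p q) (hq : q ≤ q') : Compat p q' :=
  let ⟨r, hp, hrq⟩ := h
  ⟨r, hp, hrq.trans hq⟩

theorem denseSub_of_forall_mem {D : Set α} (h : ∀ p, p ∈ D) : DenseSub D :=
  fun p => ⟨p, h p, le_rfl⟩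

theorem sigmaSoftLinked_of_countable {ι : Type*} [Countable ι] [Nonempty ι] {Q : ι → Set α}
    (hleaf : ∀ i, LeafLinked (Q i)) (hdense : DenseSub (⋃ i, Q i))
    (hext : ∀ i j, ∃ k, ∀ p ∈ Q i, ∀ q ∈ Q j, Compat p q → ∃ r ∈ Q k, r ≤ p ∧ r ≤ q) :
    SigmaSoftLinked α := by
  obtain ⟨e, he⟩ := exists_surjective_nat ι
  refine ⟨Q ∘ e, fun n => hleaf (e n), by rwa [Function.comp_def, he.iUnion_comp], fun n n' => ?_⟩
  obtain ⟨k, hk⟩ := hext (e n) (e n')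
  obtain ⟨k', rfl⟩ := he k
  exact ⟨k', hk⟩

theorem Ultrafilter.exists_forall_eventually_eq_of_finite {ι β γ : Type*} (U : Ultrafilter ι)
    (f : ι → β → γ) {S : β → Set γ} (hS : ∀ x, (S x).Finite) (hf : ∀ n x, f n x ∈ S x) :
    ∃ v : β → γ, ∀ x, ∀ᶠ n in U, f n x = v x := by
  choose v _ hv using fun x => (U.eventually_exists_mem_iff (P := fun a n => f n x = a) (hS x)).1
    (Eventually.of_forall fun n => ⟨f n x, hf n x, rfl⟩)
  exact ⟨v, hv⟩

namespace LocCond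

variable {b hgt : ℕ → ℕ}

theorem exists_union_le (x y : LocCond b hgt) {n : ℕ} (hx : x.1.2 ≤ n) (hy : y.1.2 ≤ n)
    (hyx : ∀ i < x.1.2, y.1.1 i ⊆ x.1.1 i) (hxy : ∀ i < y.1.2, x.1.1 i ⊆ y.1.1 i)
    (hcard : ∀ i, (x.1.1 i ∪ y.1.1 i).card ≤ hgt i) :
    ∃ r : LocCond b hgt, (∀ i, r.1.1 i = x.1.1 i ∪ y.1.1 i) ∧ r.1.2 = n ∧ r ≤ x ∧ r ≤ y := by
  obtain ⟨Mx, hMx⟩ := x.2.2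
  obtain ⟨My, hMy⟩ := y.2.2
  exact ⟨⟨(fun i => x.1.1 i ∪ y.1.1 i, n),
      fun i => ⟨Finset.union_subset (x.2.1 i).1 (y.2.1 i).1, hcard i⟩,
      Mx + My, fun i => (Finset.card_union_le _ _).trans (add_le_add (hMx i) (hMy i))⟩,
    fun _ => rfl, rfl,
    ⟨hx, fun i hi => Finset.union_eq_left.2 (hyx i hi), fun _ => Finset.subset_union_left⟩,
    ⟨hy, fun i hi => Finset.union_eq_right.2 (hxy i hi), fun _ => Finset.subset_union_right⟩⟩

theorem subset_of_compat {x y : LocCond b hgt} (h : Compat x y) {i : ℕ} (hi : i < y.1.2) :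
    x.1.1 i ⊆ y.1.1 i := by
  obtain ⟨t, htx, hty⟩ := h
  rw [← hty.2.1 i hi]
  exact htx.2.2 i

theorem card_union_le_of_compat {x y : LocCond b hgt} (h : Compat x y) (i : ℕ) :
    (x.1.1 i ∪ y.1.1 i).card ≤ hgt i := by
  obtain ⟨t, htx, hty⟩ := h
  exact (Finset.card_le_card (Finset.union_subset (htx.2.2 i) (hty.2.2 i))).trans (t.2.1 i).2

theorem compat_of_le_of_eqOn {r v q : LocCond b hgt} (hrv : r ≤ v) (hqv : q.1.2 ≤ v.1.2)
    {N : ℕ} (hrN : r.1.2 ≤ N) (hqN : ∀ i < N, q.1.1 i = v.1.1 i)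
    (hcard : ∀ i, N ≤ i → (r.1.1 i ∪ q.1.1 i).card ≤ hgt i) : Compat r q := by
  have hqN' : q.1.2 ≤ N := hqv.trans (hrv.1.trans hrN)
  have hqr : ∀ i < N, q.1.1 i ⊆ r.1.1 i := fun i hi => (hqN i hi).trans_subset (hrv.2.2 i)
  have hrq : ∀ i < q.1.2, r.1.1 i ⊆ q.1.1 i := fun i hi =>
    ((hrv.2.1 i (hi.trans_le hqv)).trans (hqN i (hi.trans_le hqN')).symm).subset
  have hcard' : ∀ i, (r.1.1 i ∪ q.1.1 i).card ≤ hgt i := by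
    intro i
    rcases lt_or_ge i N with hi | hi
    · rw [Finset.union_eq_left.2 (hqr i hi)]
      exact (r.2.1 i).2
    · exact hcard i hi
  obtain ⟨t, -, -, htr, htq⟩ :=
    exists_union_le r q hrN hqN' (fun i hi => hqr i (hi.trans_le hrN)) hrq hcard'
  exact ⟨t, htr, htq⟩

theorem exists_mem_locSet (p : LocCond b hgt) :
    ∃ s m, FinSlalom b hgt s ∧ p ∈ LocSet b hgt s m := by
  obtain ⟨m, hm⟩ := p.2.2
  refine ⟨List.ofFn fun k : Fin p.1.2 => p.1.1 k, m, fun k hk => ?_, fun k hk => ?_, by simp, hm⟩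
  · simpa using p.2.1 k
  · simp

theorem exists_le_of_compat_of_length_le {s s' : List (Finset ℕ)} {m m' : ℕ}
    (hlen : s.length ≤ s'.length) {p q : LocCond b hgt} (hp : p ∈ LocSet b hgt s m)
    (hq : q ∈ LocSet b hgt s' m') (hpq : Compat p q) :
    ∃ r ∈ LocSet b hgt s' (m + m'), r ≤ p ∧ r ≤ q := by
  obtain ⟨r, hr, hrn, hrp, hrq⟩ := exists_union_le p q (n := s'.length) (hp.2.1 ▸ hlen)
    hq.2.1.le (fun _ hi => subset_of_compat hpq.symm hi) (fun _ hi => subset_of_compat hpq hi)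
    (card_union_le_of_compat hpq)
  refine ⟨r, ⟨fun k hk => ?_, hrn, fun i => ?_⟩, hrp, hrq⟩
  · rw [hr, Finset.union_eq_right.2 (subset_of_compat hpq (hq.2.1 ▸ hk))]
    exact hq.1 k hk
  · rw [hr]
    exact (Finset.card_union_le _ _).trans (add_le_add (hp.2.2 i) (hq.2.2 i))

theorem exists_locSet_common_ext (s s' : List (Finset ℕ)) (m m' : ℕ) :
    ∃ t : List (Finset ℕ) × ℕ, ∀ p ∈ LocSet b hgt s m, ∀ q ∈ LocSet b hgt s' m',
      Compat p q → ∃ r ∈ LocSet b hgt t.1 t.2, r ≤ p ∧ r ≤ q := by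
  rcases le_total s.length s'.length with h | h
  · exact ⟨(s', m + m'), fun p hp q hq => exists_le_of_compat_of_length_le h hp hq⟩
  · refine ⟨(s, m' + m), fun p hp q hq hpq => ?_⟩
    obtain ⟨r, hr, hrq, hrp⟩ := exists_le_of_compat_of_length_le h hq hp hpq.symm
    exact ⟨r, hr, hrp, hrq⟩

theorem exists_mem_locSet_eventually_eq {s : List (Finset ℕ)} {m : ℕ} {q : ℕ → LocCond b hgt}
    (hq : ∀ n, q n ∈ LocSet b hgt s m) (U : Ultrafilter ℕ) :
    ∃ v ∈ LocSet b hgt s m, ∀ i, ∀ᶠ n in U, (q n).1.1 i = v.1.1 i := by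
  obtain ⟨v, hv⟩ := U.exists_forall_eventually_eq_of_finite (fun n i => (q n).1.1 i)
    (S := fun i => ((Finset.range (b i)).powerset : Set (Finset ℕ)))
    (fun _ => Finset.finite_toSet _)
    (fun n i => Finset.mem_coe.2 (Finset.mem_powerset.2 ((q n).2.1 i).1))
  choose w hw using fun i => (hv i).exists
  have hslalom : ∀ i, v i ⊆ Finset.range (b i) ∧ (v i).card ≤ hgt i := fun i =>
    hw i ▸ (q (w i)).2.1 i
  have hcard : ∀ i, (v i).card ≤ m := fun i => hw i ▸ (hq (w i)).2.2 i
  have hs : ∀ (k : ℕ) (hk : k < s.length), v k = s[k] := fun k hk => hw k ▸ (hq (w k)).1 k hk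
  exact ⟨⟨(v, s.length), hslalom, m, hcard⟩, ⟨hs, rfl, hcard⟩, hv⟩

theorem leafLinked_locSet (hinf : Tendsto hgt atTop atTop) (s : List (Finset ℕ)) (m : ℕ) :
    LeafLinked (LocSet b hgt s m) := by
  intro a ha
  by_contra! hcon
  choose q hq hinc using hcon
  let U := Ultrafilter.of (atTop : Filter ℕ)
  obtain ⟨v, hv, hqv⟩ := exists_mem_locSet_eventually_eq hq U
  obtain ⟨-, ⟨j, rfl⟩, r, hrv, hra⟩ := ha.2 v
  obtain ⟨M, hM⟩ := r.2.2
  obtain ⟨N, hN⟩ := eventually_atTop.1 (hinf.eventually_ge_atTop (M + m))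
  have hagree : ∀ᶠ n in U, ∀ i ∈ Finset.range (max N r.1.2), (q n).1.1 i = v.1.1 i :=
    (Finset.range _).eventually_all.2 fun i _ => hqv i
  have hU : ∀ᶠ n in U, j < n := Ultrafilter.of_le _ (eventually_gt_atTop j)
  obtain ⟨n, hjn, hn⟩ := (hU.and hagree).exists
  have hcompat : Compat r (q n) :=
    compat_of_le_of_eqOn hrv ((hq n).2.1.trans hv.2.1.symm).le (le_max_right _ _)
      (fun i hi => hn i (Finset.mem_range.2 hi)) fun i hi =>
        (Finset.card_union_le _ _).trans
          ((add_le_add (hM i) ((hq n).2.2 i)).trans (hN i ((le_max_left _ _).trans hi)))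
  exact hinc n j hjn (hcompat.symm.mono_right hra)

end LocCond

theorem stmt16_general (b hgt : ℕ → ℕ)
    (hinf : Filter.Tendsto hgt Filter.atTop Filter.atTop) :
    SigmaSoftLinked (LocCond b hgt) ∧
    (∀ (s : List (Finset ℕ)) (m : ℕ), FinSlalom b hgt s →
      LeafLinked (LocSet b hgt s m)) ∧
    DenseSub (⋃ (s : List (Finset ℕ)) (_ : FinSlalom b hgt s) (m : ℕ),
      LocSet b hgt s m) ∧
    ∀ (s s' : List (Finset ℕ)) (m m' : ℕ), FinSlalom b hgt s →
      FinSlalom b hgt s' → s.length ≤ s'.length →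
      ∀ p ∈ LocSet b hgt s m, ∀ q ∈ LocSet b hgt s' m',
        Compat p q → ∃ r ∈ LocSet b hgt s' (m + m'), r ≤ p ∧ r ≤ q := by
  refine ⟨sigmaSoftLinked_of_countable (Q := fun t : List (Finset ℕ) × ℕ => LocSet b hgt t.1 t.2)
      (fun t => LocCond.leafLinked_locSet hinf t.1 t.2) (denseSub_of_forall_mem fun p => ?_)
      (fun t t' => LocCond.exists_locSet_common_ext t.1 t'.1 t.2 t'.2),
    fun s m _ => LocCond.leafLinked_locSet hinf s m, denseSub_of_forall_mem fun p => ?_,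
    fun _ _ _ _ _ _ hlen _ hp _ hq => LocCond.exists_le_of_compat_of_length_le hlen hp hq⟩
  all_goals obtain ⟨s, m, hs, hp⟩ := LocCond.exists_mem_locSet p
  · exact Set.mem_iUnion.2 ⟨(s, m), hp⟩
  · exact Set.mem_iUnion₂.2 ⟨s, hs, Set.mem_iUnion.2 ⟨m, hp⟩⟩

/-- The localization forcing `LOC_{b,hgt}` is σ-soft-linked, witnessed by the
sets `L_{b,hgt}(s,m)`: each is leaf-linked, their union is dense, and
compatible members of `L(s,m)` and `L(s',m')` with `|s| ≤ |s'|` have a common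
extension in `L(s', m + m')`. -/
theorem stmt16 (b hgt : ℕ → ℕ) (hb : ∀ i, 0 < b i) (hhb : ∀ i, hgt i ≤ b i)
    (hinf : Filter.Tendsto hgt Filter.atTop Filter.atTop)
    (hlim : Filter.Tendsto (fun i => (hgt i : ℝ) / (b i : ℝ))
      Filter.atTop (nhds 0)) :
    SigmaSoftLinked (LocCond b hgt) ∧
    (∀ (s : List (Finset ℕ)) (m : ℕ), FinSlalom b hgt s →
      LeafLinked (LocSet b hgt s m)) ∧
    DenseSub (⋃ (s : List (Finset ℕ)) (_ : FinSlalom b hgt s) (m : ℕ),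
      LocSet b hgt s m) ∧
    ∀ (s s' : List (Finset ℕ)) (m m' : ℕ), FinSlalom b hgt s →
      FinSlalom b hgt s' → s.length ≤ s'.length →
      ∀ p ∈ LocSet b hgt s m, ∀ q ∈ LocSet b hgt s' m',
        Compat p q → ∃ r ∈ LocSet b hgt s' (m + m'), r ≤ p ∧ r ≤ q :=
  stmt16_general b hgt hinf
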